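/- arXiv:1909.12188 — 7 statements merged into one kernel-verified Lean document; each statement's English description precedes it below -/
import Mathlib

section
/- Let F be a field with a valuation v and an ordering ≤ such that the valuation ring of v is convex with respect to ≤. If the completion-style density holds, namely F is dense in a real closure of (F,≤), then the value group vF is divisible. -/
/-- A linearly ordered field is real closed if every nonnegative element is a square
and every polynomial of odd degree has a root. -/
def IsRealClosedDef (R : Type*) [Field R] [LinearOrder R] [IsStrictOrderedRing R] : Prop :=
  (∀ x : R, 0 ≤ x → ∃ y : R, y ^ 2 = x) ∧
    ∀ p : Polynomial R, Odd p.natDegree → ∃ x : R, p.eval x = 0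

/-!
The `n`-th root `r` of `|x|` in the real closure is approximated by `y ∈ F` up to a factor `2`,
so `y ^ n` and `|x|` bound each other up to the factor `2 ^ n`. Convexity makes `v` monotone on
the nonnegative elements, and `v (2 ^ n) ≤ 1` since `v` is non-archimedean; hence `v y ^ n = v x`.
-/

section RealClosed

variable {R : Type*} [Field R] [LinearOrder R] [IsStrictOrderedRing R]

/-- Even exponents are halved by a square root, odd ones are handled by a root of `X ^ n - C x`. -/
theorem IsRealClosedDef.exists_pos_pow_eq (hrc : IsRealClosedDef R) {n : ℕ} (hn : 0 < n)
    {x : R} (hx : 0 < x) : ∃ r : R, 0 < r ∧ r ^ n = x := by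
  induction n using Nat.strong_induction_on generalizing x with
  | _ n ih =>
    rcases Nat.even_or_odd' n with ⟨m, rfl | rfl⟩
    · obtain ⟨s, hs, rfl⟩ := ih m (by omega) (by omega) hx
      obtain ⟨y, hy⟩ := hrc.1 s hs.le
      have hy0 : y ≠ 0 := by rintro rfl; exact hs.ne (by simpa using hy)
      exact ⟨|y|, abs_pos.mpr hy0, by rw [pow_mul, sq_abs, hy]⟩
    · obtain ⟨t, ht⟩ := hrc.2 (Polynomial.X ^ (2 * m + 1) - Polynomial.C x)
        (by rw [Polynomial.natDegree_X_pow_sub_C]; exact odd_two_mul_add_one m)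
      have htx : t ^ (2 * m + 1) = x := by simpa [sub_eq_zero] using ht
      refine ⟨t, ?_, htx⟩
      by_contra! ht0
      exact (Odd.pow_nonpos (odd_two_mul_add_one m) ht0).not_gt (htx ▸ hx)

end RealClosed

section Dense

variable {F R : Type*} [Field F] [LinearOrder F] [IsStrictOrderedRing F]
  [Field R] [LinearOrder R] [IsStrictOrderedRing R]

theorem RingHom.le_iff_map_le_of_nonneg_iff (f : F →+* R) (hf : ∀ x : F, 0 ≤ x ↔ 0 ≤ f x)
    (a b : F) : a ≤ b ↔ f a ≤ f b := by
  rw [← sub_nonneg, hf, map_sub, sub_nonneg]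

theorem exists_pow_le_two_pow_mul_of_dense (f : F →+* R)
    (hf : ∀ x : F, 0 ≤ x ↔ 0 ≤ f x) (hdense : ∀ x ε : R, 0 < ε → ∃ y : F, |x - f y| < ε)
    {n : ℕ} (hroot : ∀ x : R, 0 < x → ∃ r : R, 0 < r ∧ r ^ n = x) {x : F} (hx : 0 < x) :
    ∃ y : F, 0 < y ∧ x ≤ 2 ^ n * y ^ n ∧ y ^ n ≤ 2 ^ n * x := by
  have hle := f.le_iff_map_le_of_nonneg_iff hf
  have hfx : 0 < f x := lt_of_not_ge fun h => hx.not_ge ((hle x 0).mpr (by rwa [map_zero]))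
  obtain ⟨r, hr, hrx⟩ := hroot (f x) hfx
  obtain ⟨y, hy⟩ := hdense r (r / 2) (half_pos hr)
  obtain ⟨hy_lo, hy_hi⟩ := abs_sub_lt_iff.mp hy
  have hry : r ≤ 2 * f y := by linarith
  have hyr : f y ≤ 2 * r := by linarith
  have hfy : 0 < f y := by linarith
  have hy0 : 0 < y := not_le.mp fun h => hfy.not_ge (by simpa using (hle y 0).mp h)
  refine ⟨y, hy0, ?_, ?_⟩
  · rw [hle, map_mul, map_pow, map_pow, map_ofNat, ← hrx, ← mul_pow]
    exact pow_le_pow_left₀ hr.le hry n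
  · rw [hle, map_mul, map_pow, map_pow, map_ofNat, ← hrx, ← mul_pow]
    exact pow_le_pow_left₀ hfy.le hyr n

end Dense

section Convex

variable {F Γ₀ : Type*} [Field F] [LinearOrder F] [IsStrictOrderedRing F]
  [LinearOrderedCommGroupWithZero Γ₀] {v : Valuation F Γ₀}

theorem Valuation.map_le_map_of_convex (hconv : ∀ x y : F, 0 ≤ x → x ≤ y → v y ≤ 1 → v x ≤ 1)
    {a b : F} (ha : 0 ≤ a) (hab : a ≤ b) : v a ≤ v b := by
  rcases ha.eq_or_lt with rfl | ha
  · simp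
  have hb : 0 < b := ha.trans_le hab
  have hdiv : v (a / b) ≤ 1 :=
    hconv _ 1 (div_nonneg ha.le hb.le) ((div_le_one hb).mpr hab) v.map_one.le
  calc v a = v (a / b) * v b := by rw [← v.map_mul, div_mul_cancel₀ _ hb.ne']
    _ ≤ v b := mul_le_of_le_one_left' hdiv

theorem Valuation.map_eq_of_le_mul_of_le_mul
    (hconv : ∀ x y : F, 0 ≤ x → x ≤ y → v y ≤ 1 → v x ≤ 1)
    {a b c : F} (hc : v c ≤ 1) (ha : 0 ≤ a) (hb : 0 ≤ b) (hab : a ≤ c * b) (hba : b ≤ c * a) :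
    v a = v b := by
  have key : ∀ {a b : F}, 0 ≤ a → a ≤ c * b → v a ≤ v b := fun ha hab =>
    (v.map_le_map_of_convex hconv ha hab).trans (by rw [v.map_mul]; exact mul_le_of_le_one_left' hc)
  exact le_antisymm (key ha hab) (key hb hba)

end Convex

theorem Valuation.map_abs {K Γ₀ : Type*} [Ring K] [LinearOrder K]
    [LinearOrderedCommMonoidWithZero Γ₀] (v : Valuation K Γ₀) (x : K) : v |x| = v x := by
  rcases abs_choice x with h | h <;> simp only [h, v.map_neg]

theorem Valuation.map_two_le_one {K Γ₀ : Type*} [Ring K] [LinearOrderedCommMonoidWithZero Γ₀]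
    (v : Valuation K Γ₀) : v 2 ≤ 1 := by
  simpa [one_add_one_eq_two] using v.map_add (1 : K) 1

/-- if `v` is a non-trivial valuation on the ordered field `F` whose valuation
ring is convex for the ordering, and `F` is dense (for the order topology) in a real closure
of `(F, ≤)`, then the value group of `v` is divisible. -/
theorem value_group_divisible_of_dense_in_real_closure
    (F : Type) [Field F] [LinearOrder F] [IsStrictOrderedRing F]
    (Γ₀ : Type) [LinearOrderedCommGroupWithZero Γ₀]
    (v : Valuation F Γ₀)
    (hconv : ∀ x y : F, 0 ≤ x → x ≤ y → v y ≤ 1 → v x ≤ 1)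
    (R : Type) (_ : Field R) (_ : LinearOrder R) (_ : IsStrictOrderedRing R) (_ : Algebra F R)
    (hrc : IsRealClosedDef R)
    (hord : ∀ x : F, 0 ≤ x ↔ 0 ≤ algebraMap F R x)
    (hdense : ∀ x : R, ∀ ε : R, 0 < ε → ∃ y : F, |x - algebraMap F R y| < ε) :
    ∀ x : F, x ≠ 0 → ∀ n : ℕ, 0 < n → ∃ y : F, y ≠ 0 ∧ (v y) ^ n = v x := by
  intro x hx n hn
  obtain ⟨y, hy, hxy, hyx⟩ := exists_pow_le_two_pow_mul_of_dense (algebraMap F R) hord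
    hdense (fun _ => hrc.exists_pos_pow_eq hn) (abs_pos.mpr hx)
  have h2n : v (2 ^ n) ≤ 1 := by rw [v.map_pow]; exact pow_le_one' v.map_two_le_one n
  refine ⟨y, hy.ne', ?_⟩
  rw [← v.map_pow, v.map_eq_of_le_mul_of_le_mul hconv h2n (pow_nonneg hy.le n) (abs_nonneg x)
    hyx hxy, v.map_abs]
end

section
/- Let v₁ and v₂ be valuations on a field F that are incomparable (neither valuation ring contains the other) and dependent (the smallest subring containing both valuation rings is not all of F, equivalently they have a common non-trivial coarsening). If F is dense in a henselization of (F,v₁) and dense in a henselization of (F,v₂), then the residue fields Fv₁ and Fv₂ are both algebraically closed. -/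
/-!
Let `O` be the ring generated by the two valuation rings `O₁, O₂`. Incomparability gives, for
every `d ∈ O`, some `t` in the maximal ideal `m₂` with `v₁ t > v₁ d`, and this splits every
element of `O` as an element of `m₁` plus an element of `m₂`: residues modulo `m₁` and modulo `m₂`
can be prescribed simultaneously. So a monic irreducible `p` of degree `n` over `Fv₁` has a monic lift `G ∈ F[X]`
that reduces to `X ^ (n - 1) * (X - 1)` modulo `m₂`. As `1` is a simple root of that reduction,
Hensel's lemma in a henselization of `(F, v₂)` in which `F` is dense gives `y ∈ F` with `v₂ (G y)`
arbitrarily small. Dependence (`O ≠ F`) means that `v₂`-small enough elements lie in `m₁`, so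
`v₁ (G y) < 1`; then `y` is `v₁`-integral and its residue is a root of `p`. The roles of `v₁` and
`v₂` are symmetric.
-/

/-- `F` is dense in a henselization of `(F, v)`: there is an algebraic valued field
extension of `(F, v)` which is henselian and in which `F` is dense for the valuation
topology.  (A henselization is such an extension, and conversely any such extension
contains a henselization, so this is equivalent to density in a henselization.) -/
def DenseInHenselization (F : Type) [Field F] (Γ₀ : Type)
    [LinearOrderedCommGroupWithZero Γ₀] (v : Valuation F Γ₀) : Prop :=
  ∃ (H : Type) (_ : Field H) (_ : Algebra F H) (w : Valuation H Γ₀),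
    (∀ y : F, w (algebraMap F H y) = v y) ∧
    Algebra.IsAlgebraic F H ∧
    HenselianLocalRing w.valuationSubring ∧
    ∀ x : H, ∀ c : F, c ≠ 0 → ∃ y : F, w (x - algebraMap F H y) < v c

open Polynomial

namespace Valuation

variable {K : Type*} [Field K] {Γ : Type*} [LinearOrderedCommGroupWithZero Γ] (v : Valuation K Γ)

theorem map_eval_lt_one {A : K[X]} (hA : ∀ i, v (A.coeff i) < 1) {y : K} (hy : v y ≤ 1) :
    v (A.eval y) < 1 := by
  rw [eval_eq_sum_range]
  refine v.map_sum_lt one_ne_zero fun i _ => ?_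
  rw [map_mul, map_pow]
  exact mul_lt_one_of_lt_of_le (hA i) (pow_le_one' hy i)

theorem map_coeff_derivative_lt_one {A : K[X]} (hA : ∀ i, v (A.coeff i) < 1) (i : ℕ) :
    v (A.derivative.coeff i) < 1 := by
  rw [coeff_derivative, map_mul]
  have hi : v ((i : K) + 1) ≤ 1 := by exact_mod_cast natCast_mem v.valuationSubring (i + 1)
  exact mul_lt_one_of_lt_of_le (hA _) hi

theorem map_eval_eq_pow_natDegree {G : K[X]} (hG : G.Monic) (hint : ∀ i, v (G.coeff i) ≤ 1)
    {y : K} (hy : 1 < v y) : v (G.eval y) = v y ^ G.natDegree := by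
  have hy₀ : v y ≠ 0 := (zero_lt_one.trans hy).ne'
  conv_lhs => rw [hG.as_sum]
  simp only [eval_add, eval_pow, eval_X, eval_finsetSum, eval_mul, eval_C]
  refine v.map_add_eq_of_lt_left ?_ |>.trans (map_pow v y _)
  rw [map_pow]
  refine v.map_sum_lt (pow_ne_zero _ hy₀) fun i hi => ?_
  rw [map_mul, map_pow]
  exact mul_lt_of_le_one_of_lt (hint i) (pow_lt_pow_right₀ hy (Finset.mem_range.1 hi))

theorem le_one_of_map_eval_lt_one {G : K[X]} (hG : G.Monic) (hint : ∀ i, v (G.coeff i) ≤ 1)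
    {y : K} (hy : v (G.eval y) < 1) : v y ≤ 1 := by
  by_contra! h
  rw [v.map_eval_eq_pow_natDegree hG hint h] at hy
  exact (one_le_pow₀ h.le).not_gt hy

theorem exists_monic_map_subtype_eq {G : K[X]} (hG : G.Monic) (hint : ∀ i, v (G.coeff i) ≤ 1) :
    ∃ Q : v.valuationSubring[X], Q.map v.valuationSubring.subtype = G ∧ Q.Monic := by
  have hG' : G ∈ lifts v.valuationSubring.subtype :=
    (lifts_iff_coeff_lifts G).2 fun i => ⟨⟨G.coeff i, hint i⟩, rfl⟩
  obtain ⟨Q, hQ, -, hQm⟩ := lifts_and_natDegree_eq_and_monic hG' hG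
  exact ⟨Q, hQ, hQm⟩

theorem map_eval_sub_eval_le (Q : v.valuationSubring[X]) (x y : v.valuationSubring) :
    v ((↑(Q.eval x) : K) - ↑(Q.eval y)) ≤ v ((x : K) - y) := by
  obtain ⟨k, hk⟩ := sub_dvd_eval_sub x y Q
  have hk' : (↑(Q.eval x) : K) - ↑(Q.eval y) = ((x : K) - y) * k := by
    exact_mod_cast congrArg Subtype.val hk
  rw [hk', map_mul]
  exact mul_le_of_le_one_right' k.2

theorem map_eval_one_lt_one_and_map_derivative_eval_one_eq_one {G : K[X]} (m : ℕ)
    (hG : ∀ i, v (G.coeff i - (X ^ m * (X - 1) : K[X]).coeff i) < 1) :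
    v (G.eval 1) < 1 ∧ v (G.derivative.eval 1) = 1 := by
  set A := G - X ^ m * (X - 1)
  have hA : ∀ i, v (A.coeff i) < 1 := by simpa only [A, coeff_sub] using hG
  have hT₀ : (X ^ m * (X - 1) : K[X]).eval 1 = 0 := by simp
  have hT₁ : (X ^ m * (X - 1) : K[X]).derivative.eval 1 = 1 := by simp [derivative_mul]
  rw [show G = A + X ^ m * (X - 1) by simp [A], eval_add, derivative_add, eval_add, hT₀, hT₁,
    add_zero, add_comm]
  exact ⟨v.map_eval_lt_one hA v.map_one.le,
    v.map_one_add_of_lt (v.map_eval_lt_one (v.map_coeff_derivative_lt_one hA) v.map_one.le)⟩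

theorem exists_eval_map_residue_eq_zero {P : v.valuationSubring[X]} {G : K[X]} (hG : G.Monic)
    (hGP : ∀ i, v (G.coeff i - (P.map v.valuationSubring.subtype).coeff i) < 1) {y : K}
    (hy : v (G.eval y) < 1) :
    ∃ x, (P.map (IsLocalRing.residue v.valuationSubring)).eval x = 0 := by
  set P₁ := P.map v.valuationSubring.subtype
  have hP₁ : ∀ i, v (P₁.coeff i) ≤ 1 := fun i => by rw [coeff_map]; exact (P.coeff i).2
  have hint : ∀ i, v (G.coeff i) ≤ 1 := fun i => by
    simpa using v.map_add_le (hGP i).le (hP₁ i)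
  have hy₁ : v y ≤ 1 := v.le_one_of_map_eval_lt_one hG hint hy
  have hP₁y : v (P₁.eval y) < 1 := by
    have := v.map_eval_lt_one (A := G - P₁) (by simpa using hGP) hy₁
    rw [eval_sub] at this
    simpa using (v.map_sub _ _).trans_lt (max_lt hy this)
  refine ⟨IsLocalRing.residue _ ⟨y, hy₁⟩, ?_⟩
  rw [eval_map_apply, IsLocalRing.residue_eq_zero_iff, v.mem_maximalIdeal_iff]
  change v (v.valuationSubring.subtype (P.eval ⟨y, hy₁⟩)) < 1
  rwa [← eval_map_apply]

end Valuation

theorem Polynomial.IsMonicOfDegree.of_coeff_eq {R : Type*} [Semiring R] [Nontrivial R]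
    {p g : R[X]} {n : ℕ} (hp : IsMonicOfDegree p n) (h : ∀ i, n ≤ i → g.coeff i = p.coeff i) :
    IsMonicOfDegree g n := by
  refine (isMonicOfDegree_iff g n).2 ⟨natDegree_le_iff_coeff_eq_zero.2 fun i hi => ?_, ?_⟩
  · rw [h i hi.le, coeff_eq_zero_of_natDegree_lt (hp.natDegree_eq ▸ hi)]
  · rw [h n le_rfl, ← hp.natDegree_eq, hp.monic.coeff_natDegree]

section IncomparableValuations

variable {F : Type*} [Field F] {Γ₁ Γ₂ : Type*} [LinearOrderedCommGroupWithZero Γ₁]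
  [LinearOrderedCommGroupWithZero Γ₂] {v₁ : Valuation F Γ₁} {v₂ : Valuation F Γ₂}

theorem exists_forall_lt_one_of_closure_ne_top
    (hdep : Subring.closure ((v₁.valuationSubring : Set F) ∪ v₂.valuationSubring) ≠ ⊤) :
    ∃ c : F, c ≠ 0 ∧ v₂ c ≤ 1 ∧ ∀ y, v₂ y < v₂ c → v₁ y < 1 := by
  obtain ⟨x, hx⟩ : ∃ x, x ∉ Subring.closure ((v₁.valuationSubring : Set F) ∪ v₂.valuationSubring) :=
    not_forall.1 fun h => hdep ((Subring.eq_top_iff' _).2 h)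
  have hx₀ : x ≠ 0 := by rintro rfl; exact hx (zero_mem _)
  have hx₂ : 1 < v₂ x := by
    by_contra! h
    exact hx (Subring.subset_closure (Or.inr h))
  refine ⟨x⁻¹, inv_ne_zero hx₀, by simpa using inv_le_one_of_one_le₀ hx₂.le, fun y hy => ?_⟩
  by_contra! hy₁
  have hy₀ : y ≠ 0 := by rintro rfl; simp at hy₁
  have hyx : y / x⁻¹ ∈ Subring.closure ((v₁.valuationSubring : Set F) ∪ v₂.valuationSubring) :=
    Subring.subset_closure (Or.inr (show v₂ (y / x⁻¹) ≤ 1 by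
      rw [map_div₀]
      exact ((div_lt_one₀ (v₂.pos_iff.2 (inv_ne_zero hx₀))).2 hy).le))
  have hy' : y⁻¹ ∈ Subring.closure ((v₁.valuationSubring : Set F) ∪ v₂.valuationSubring) :=
    Subring.subset_closure (Or.inl (by simpa using inv_le_one_of_one_le₀ hy₁))
  exact hx (by simpa [hy₀, mul_comm y x, mul_assoc] using mul_mem hyx hy')

theorem map_le_of_mem_closure_union {B : Γ₁} (hB : ∀ b, v₂ b ≤ 1 → v₁ b ≤ B) {x : F}
    (hx : x ∈ Subring.closure ((v₁.valuationSubring : Set F) ∪ v₂.valuationSubring)) :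
    v₁ x ≤ B := by
  rw [Subring.mem_closure_iff, Submonoid.closure_union] at hx
  induction hx using AddSubgroup.closure_induction with
  | mem x hx =>
    obtain ⟨a, ha, b, hb, rfl⟩ := Submonoid.mem_sup.1 hx
    have ha₁ : v₁ a ≤ 1 := (Submonoid.closure_eq v₁.valuationSubring.toSubring.toSubmonoid).le ha
    have hb₂ : v₂ b ≤ 1 := (Submonoid.closure_eq v₂.valuationSubring.toSubring.toSubmonoid).le hb
    simpa [map_mul] using mul_le_mul' ha₁ (hB b hb₂)
  | zero => simp
  | add x y _ _ hx hy => exact (v₁.map_add x y).trans (max_le hx hy)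
  | neg x _ hx => rwa [Valuation.map_neg]

theorem exists_lt_one_and_lt_of_mem_closure
    (hinc₁ : ¬ (v₁.valuationSubring : Set F) ⊆ v₂.valuationSubring)
    (hinc₂ : ¬ (v₂.valuationSubring : Set F) ⊆ v₁.valuationSubring) {d : F}
    (hd : d ∈ Subring.closure ((v₁.valuationSubring : Set F) ∪ v₂.valuationSubring)) :
    ∃ t, v₂ t < 1 ∧ v₁ d < v₁ t := by
  obtain ⟨z, hz₁, hz₂⟩ := Set.not_subset.1 hinc₁
  obtain ⟨u, hu₂, hu₁⟩ := Set.not_subset.1 hinc₂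
  replace hz₂ : 1 < v₂ z := not_le.1 hz₂
  replace hu₁ : 1 < v₁ u := not_le.1 hu₁
  have hz₀ : z ≠ 0 := by rintro rfl; simp at hz₂
  by_contra! h
  have hO₂ : ∀ b, v₂ b ≤ 1 → v₁ b ≤ v₁ (d * z) := fun b hb => by
    have := h (b / z) (by
      rw [map_div₀]; exact (div_lt_one₀ (zero_lt_one.trans hz₂)).2 (hb.trans_lt hz₂))
    rwa [map_div₀, div_le_iff₀ (v₁.pos_iff.2 hz₀), ← map_mul] at this
  have hdz : d * z ∈ Subring.closure ((v₁.valuationSubring : Set F) ∪ v₂.valuationSubring) :=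
    mul_mem hd (Subring.subset_closure (Or.inl hz₁))
  have h₁ : 1 ≤ v₁ (d * z) := by simpa using map_le_of_mem_closure_union hO₂ (one_mem _)
  have h₂ := map_le_of_mem_closure_union hO₂ (mul_mem hdz (Subring.subset_closure (Or.inr hu₂)))
  rw [map_mul] at h₂
  exact (lt_mul_of_one_lt_right (zero_lt_one.trans_le h₁) hu₁).not_ge h₂

theorem exists_add_eq_of_mem_closure
    (hinc₁ : ¬ (v₁.valuationSubring : Set F) ⊆ v₂.valuationSubring)
    (hinc₂ : ¬ (v₂.valuationSubring : Set F) ⊆ v₁.valuationSubring) {c : F}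
    (hc : c ∈ Subring.closure ((v₁.valuationSubring : Set F) ∪ v₂.valuationSubring)) :
    ∃ x y, v₁ x < 1 ∧ v₂ y < 1 ∧ x + y = c := by
  by_cases hc₁ : v₁ c < 1
  · exact ⟨c, 0, hc₁, by simp, add_zero c⟩
  by_cases hc₂ : v₂ c < 1
  · exact ⟨0, c, by simp, hc₂, zero_add c⟩
  push Not at hc₁ hc₂
  obtain ⟨t, ht₂, ht₁⟩ := exists_lt_one_and_lt_of_mem_closure hinc₁ hinc₂ (mul_mem hc hc)
  have hct₁ : v₁ (c + t) = v₁ t := by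
    refine v₁.map_add_eq_of_lt_right (lt_of_le_of_lt ?_ ht₁)
    simpa [map_mul] using mul_le_mul_right hc₁ (v₁ c)
  have hct₂ : v₂ (c + t) = v₂ c := v₂.map_add_eq_of_lt_left (ht₂.trans_le hc₂)
  have hct₀ : c + t ≠ 0 := by
    rw [← v₁.pos_iff, hct₁]
    exact lt_of_le_of_lt zero_le ht₁
  -- `c = c² / (c + t) + c t / (c + t)`; the denominator has `v₁`-value `v₁ t` and `v₂`-value `v₂ c`
  refine ⟨c * c / (c + t), c * t / (c + t), ?_, ?_, ?_⟩
  · rw [map_div₀, hct₁]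
    exact (div_lt_one₀ (lt_of_le_of_lt zero_le ht₁)).2 ht₁
  · rw [map_div₀, hct₂, map_mul, mul_div_cancel_left₀ _ (v₂.ne_zero_iff.2 ?_)]
    · exact ht₂
    · rintro rfl; simp at hc₂
  · field_simp

theorem exists_sub_lt_one_and_sub_lt_one
    (hinc₁ : ¬ (v₁.valuationSubring : Set F) ⊆ v₂.valuationSubring)
    (hinc₂ : ¬ (v₂.valuationSubring : Set F) ⊆ v₁.valuationSubring) {a b : F}
    (ha : v₁ a ≤ 1) (hb : v₂ b ≤ 1) :
    ∃ g, v₁ (g - a) < 1 ∧ v₂ (g - b) < 1 := by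
  obtain ⟨x, y, hx, hy, hxy⟩ := exists_add_eq_of_mem_closure hinc₁ hinc₂
    (sub_mem (Subring.subset_closure (Or.inr hb)) (Subring.subset_closure (Or.inl ha)))
  refine ⟨a + x, by simpa using hx, ?_⟩
  rw [show a + x - b = -y by linear_combination hxy]
  simpa using hy

theorem exists_coeff_sub_lt_one_and_coeff_sub_lt_one
    (hinc₁ : ¬ (v₁.valuationSubring : Set F) ⊆ v₂.valuationSubring)
    (hinc₂ : ¬ (v₂.valuationSubring : Set F) ⊆ v₁.valuationSubring) {P Q : F[X]}
    (hP : ∀ i, v₁ (P.coeff i) ≤ 1) (hQ : ∀ i, v₂ (Q.coeff i) ≤ 1) :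
    ∃ G : F[X], (∀ i, v₁ (G.coeff i - P.coeff i) < 1) ∧ (∀ i, v₂ (G.coeff i - Q.coeff i) < 1) ∧
      ∀ i, P.coeff i = Q.coeff i → G.coeff i = P.coeff i := by
  have : ∀ i, ∃ g, v₁ (g - P.coeff i) < 1 ∧ v₂ (g - Q.coeff i) < 1 ∧
      (P.coeff i = Q.coeff i → g = P.coeff i) := fun i => by
    by_cases h : P.coeff i = Q.coeff i
    · exact ⟨P.coeff i, by simp, by simp [h], fun _ => rfl⟩
    · obtain ⟨g, h₁, h₂⟩ := exists_sub_lt_one_and_sub_lt_one hinc₁ hinc₂ (hP i) (hQ i)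
      exact ⟨g, h₁, h₂, fun h' => absurd h' h⟩
  choose g hg₁ hg₂ hg using this
  have hsupp : ∀ i, g i ≠ 0 → i ∈ P.support ∪ Q.support := fun i hi => by
    by_contra h
    simp only [Finset.mem_union, mem_support_iff, not_or, not_not] at h
    exact hi (by rw [hg i (h.1.trans h.2.symm), h.1])
  exact ⟨⟨⟨Finsupp.onFinset _ g hsupp⟩⟩, hg₁, hg₂, hg⟩

end IncomparableValuations

theorem DenseInHenselization.exists_map_eval_lt {F : Type} [Field F] {Γ : Type}
    [LinearOrderedCommGroupWithZero Γ] {v : Valuation F Γ} (hd : DenseInHenselization F Γ v)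
    {G : F[X]} (hG : G.Monic) (hint : ∀ i, v (G.coeff i) ≤ 1) {a : F} (ha : v a ≤ 1)
    (h₀ : v (G.eval a) < 1) (h₁ : v (G.derivative.eval a) = 1) {c : F} (hc₀ : c ≠ 0)
    (hc : v c ≤ 1) : ∃ y, v (G.eval y) < v c := by
  obtain ⟨H, _, _, w, hw, -, _, hdense⟩ := hd
  set ι := algebraMap F H
  obtain ⟨Q, hQ, hQm⟩ := w.exists_monic_map_subtype_eq (hG.map ι)
    (fun i => by rw [coeff_map, hw]; exact hint i)
  have coe_eval : ∀ {P : w.valuationSubring[X]} {P' : F[X]},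
      P.map w.valuationSubring.subtype = P'.map ι → ∀ z (hz : ι z ∈ w.valuationSubring),
        ((P.eval ⟨ι z, hz⟩ : w.valuationSubring) : H) = ι (P'.eval z) := by
    intro P P' hP z hz
    change w.valuationSubring.subtype (P.eval ⟨ι z, hz⟩) = _
    rw [← eval_map_apply, hP]
    exact eval_map_apply (f := ι) z
  have hQ' : Q.derivative.map w.valuationSubring.subtype = G.derivative.map ι := by
    rw [← derivative_map Q, hQ, derivative_map]
  have ha' : ι a ∈ w.valuationSubring := (hw a).trans_le ha
  obtain ⟨α, hα, -⟩ := HenselianLocalRing.is_henselian Q hQm ⟨ι a, ha'⟩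
    (by rw [w.mem_maximalIdeal_iff, coe_eval hQ, hw]; exact h₀)
    ((Valuation.valuationSubring.integers w).isUnit_iff_valuation_eq_one.2
      (by rw [ValuationSubring.algebraMap_apply, coe_eval hQ', hw]; exact h₁))
  obtain ⟨y, hy⟩ := hdense α c hc₀
  have hy' : ι y ∈ w.valuationSubring := by
    simpa using w.map_sub_le (α.2 : w α ≤ 1) (hy.le.trans hc)
  refine ⟨y, ?_⟩
  calc v (G.eval y) = w (↑(Q.eval ⟨ι y, hy'⟩) - ↑(Q.eval α)) := by
        rw [hα.eq_zero, ZeroMemClass.coe_zero, sub_zero, coe_eval hQ, hw]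
    _ ≤ w (ι y - α) := w.map_eval_sub_eval_le Q _ α
    _ < v c := by rwa [Valuation.map_sub_swap]

theorem isAlgClosed_residueField_of_denseInHenselization {F : Type} [Field F] {Γ₁ Γ₂ : Type}
    [LinearOrderedCommGroupWithZero Γ₁] [LinearOrderedCommGroupWithZero Γ₂]
    {v₁ : Valuation F Γ₁} {v₂ : Valuation F Γ₂}
    (hinc₁ : ¬ (v₁.valuationSubring : Set F) ⊆ v₂.valuationSubring)
    (hinc₂ : ¬ (v₂.valuationSubring : Set F) ⊆ v₁.valuationSubring)
    (hdep : Subring.closure ((v₁.valuationSubring : Set F) ∪ v₂.valuationSubring) ≠ ⊤)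
    (hd₂ : DenseInHenselization F Γ₂ v₂) :
    IsAlgClosed (IsLocalRing.ResidueField v₁.valuationSubring) := by
  refine IsAlgClosed.of_exists_root _ fun p hp hirr => ?_
  obtain ⟨P, rfl, hPdeg, hPm⟩ := lifts_and_natDegree_eq_and_monic
    (map_surjective _ IsLocalRing.residue_surjective p) hp
  set n := P.natDegree
  have hn : 0 < n := hPdeg ▸ hirr.natDegree_pos
  set P₁ := P.map v₁.valuationSubring.subtype
  have hP₁ : IsMonicOfDegree P₁ n :=
    ⟨natDegree_map_eq_of_injective (ValuationSubring.subtype_injective _) P, hPm.map _⟩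
  set T : F[X] := X ^ (n - 1) * (X - 1)
  have hTdeg : IsMonicOfDegree T n := by
    simpa [Nat.sub_add_cancel hn] using
      (isMonicOfDegree_X_pow F (n - 1)).mul (isMonicOfDegree_X_sub_one (1 : F))
  have hT : ∀ i, v₂ (T.coeff i) ≤ 1 := fun i => by
    have : T = (X ^ (n - 1) * (X - 1) : ℤ[X]).map (Int.castRingHom F) := by simp [T]
    rw [this, coeff_map]
    exact intCast_mem v₂.valuationSubring _
  obtain ⟨G, hG₁, hG₂, hG⟩ := exists_coeff_sub_lt_one_and_coeff_sub_lt_one hinc₁ hinc₂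
    (P := P₁) (fun i => by rw [coeff_map]; exact (P.coeff i).2) hT
  have hGm : G.Monic := (hP₁.of_coeff_eq fun i hi => hG i (hP₁.coeff_eq hTdeg hi)).monic
  obtain ⟨c, hc₀, hc, hc₂₁⟩ := exists_forall_lt_one_of_closure_ne_top hdep
  obtain ⟨h₀, h₁⟩ := v₂.map_eval_one_lt_one_and_map_derivative_eval_one_eq_one _ hG₂
  have hG₂int : ∀ i, v₂ (G.coeff i) ≤ 1 := fun i => by
    simpa using v₂.map_add_le (hG₂ i).le (hT i)
  obtain ⟨y, hy⟩ := hd₂.exists_map_eval_lt hGm hG₂int v₂.map_one.le h₀ h₁ hc₀ hc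
  exact v₁.exists_eval_map_residue_eq_zero hGm hG₁ (hc₂₁ _ hy)

/-- if `v₁, v₂` are incomparable dependent valuations on `F` and `F` is dense
in henselizations of both `(F, v₁)` and `(F, v₂)`, then both residue fields are
algebraically closed. -/
theorem residue_fields_algebraically_closed_of_dense_in_henselizations
    (F : Type) [Field F]
    (Γ₁ Γ₂ : Type) [LinearOrderedCommGroupWithZero Γ₁] [LinearOrderedCommGroupWithZero Γ₂]
    (v₁ : Valuation F Γ₁) (v₂ : Valuation F Γ₂)
    -- incomparable: neither valuation ring contains the other
    (hinc₁ : ¬ (v₁.valuationSubring : Set F) ⊆ (v₂.valuationSubring : Set F))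
    (hinc₂ : ¬ (v₂.valuationSubring : Set F) ⊆ (v₁.valuationSubring : Set F))
    -- dependent: the subring generated by the two valuation rings is not all of `F`
    (hdep : Subring.closure ((v₁.valuationSubring : Set F) ∪ (v₂.valuationSubring : Set F)) ≠ ⊤)
    (hd₁ : DenseInHenselization F Γ₁ v₁) (hd₂ : DenseInHenselization F Γ₂ v₂) :
    IsAlgClosed (IsLocalRing.ResidueField v₁.valuationSubring) ∧
      IsAlgClosed (IsLocalRing.ResidueField v₂.valuationSubring) :=
  ⟨isAlgClosed_residueField_of_denseInHenselization hinc₁ hinc₂ hdep hd₂,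
    isAlgClosed_residueField_of_denseInHenselization hinc₂ hinc₁ (by rwa [Set.union_comm]) hd₁⟩
end

section
/- Let F'/F be a field extension, v' a valuation on F' whose restriction to F is v, and w a coarsening of v (i.e., O_v ⊆ O_w). Then there exists a coarsening w' of v' whose restriction to F is w. -/
/-!
Coarsenings of a valuation ring `A` correspond to prime ideals `P` of `A`, via `P ↦ A_P`.
If `Q` is a prime of `O_{v'}` lying over the prime `P` of `O_v` that belongs to `O_w`, then
`(O_{v'})_Q ∩ F = (O_v)_P = O_w`. Such a `Q` exists because `O_{v'}` is faithfully flat over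
`O_v`: it is torsion-free over a valuation ring, hence flat, and the inclusion is local.
-/

namespace ValuationSubring

variable {K L : Type*} [Field K] [Field L]

theorem mem_ofPrime_iff (A : ValuationSubring K) (P : Ideal A) [P.IsPrime] {x : K} :
    x ∈ A.ofPrime P ↔ x ∈ A ∨ ∃ h : x⁻¹ ∈ A, (⟨x⁻¹, h⟩ : A) ∉ P := by
  constructor
  · rintro ⟨a, s, hs, rfl⟩
    by_cases ha : (a : K) = 0
    · exact .inl (by simp [ha])
    refine (A.mem_or_inv_mem _).imp id fun hx => ⟨hx, fun hxP => hs ?_⟩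
    have hsa : s = ⟨_, hx⟩ * a := Subtype.ext (by simp [field])
    exact hsa ▸ P.mul_mem_right a hxP
  · rintro (hx | ⟨hx, hxP⟩)
    · exact A.le_ofPrime P hx
    · exact ⟨1, ⟨x⁻¹, hx⟩, hxP, by simp⟩

theorem isUnit_iff_inv_mem (A : ValuationSubring K) (a : A) :
    IsUnit a ↔ (a : K) ≠ 0 ∧ (a : K)⁻¹ ∈ A := by
  rw [← IsLocalRing.notMem_maximalIdeal, ← coe_mem_nonunits_iff, mem_nonunits_iff_or, not_or,
    not_not]

def comapRestrict (B : ValuationSubring L) (f : K →+* L) : B.comap f →+* B :=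
  f.restrict _ _ fun _ h => h

theorem comap_ofPrime (B : ValuationSubring L) (f : K →+* L) (Q : Ideal B) [Q.IsPrime] :
    (B.ofPrime Q).comap f = (B.comap f).ofPrime (Q.comap (B.comapRestrict f)) := by
  ext x
  simp only [mem_comap, mem_ofPrime_iff, ← map_inv₀]
  rfl

theorem isLocalHom_comapRestrict (B : ValuationSubring L) (f : K →+* L) :
    IsLocalHom (B.comapRestrict f) where
  map_nonunit a ha := by
    rw [isUnit_iff_inv_mem] at ha ⊢
    exact ⟨(map_ne_zero f).mp ha.1, by rw [mem_comap, map_inv₀]; exact ha.2⟩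

theorem exists_isPrime_comap_eq (B : ValuationSubring L) (f : K →+* L) (P : Ideal (B.comap f))
    [P.IsPrime] : ∃ Q : Ideal B, Q.IsPrime ∧ Q.comap (B.comapRestrict f) = P := by
  let := (B.comapRestrict f).toAlgebra
  have := B.isLocalHom_comapRestrict f
  have : Module.IsTorsionFree (B.comap f) B :=
    Module.isTorsionFree_iff_algebraMap_injective.mpr fun a b h =>
      Subtype.ext (f.injective (congrArg Subtype.val h))
  have : Module.Flat (B.comap f) B :=
    Module.Flat.flat_iff_torsion_eq_bot_of_isBezout.mpr
      (Submodule.isTorsionFree_iff_torsion_eq_bot.mp this)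
  have : Module.FaithfullyFlat (B.comap f) B := .of_flat_of_isLocalHom
  obtain ⟨Q, hQ, ⟨hQP⟩⟩ := P.exists_isPrime_liesOver_of_faithfullyFlat (B := B)
  exact ⟨Q, hQ, hQP.symm⟩

end ValuationSubring

/-- if `v'` is a valuation on `F'` restricting to `v` on `F`, and `w` is a
coarsening of `v` (valuation rings: `O_v ⊆ O_w`), then there is a coarsening `w'` of `v'`
restricting to `w` on `F`.  Valuations are represented by their valuation subrings. -/
theorem exists_coarsening_prolongation
    (F F' : Type) [Field F] [Field F'] [Algebra F F']
    (Ov' : ValuationSubring F') (Ov Ow : ValuationSubring F)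
    (hres : Ov'.comap (algebraMap F F') = Ov)
    (hcoarse : Ov ≤ Ow) :
    ∃ Ow' : ValuationSubring F', Ov' ≤ Ow' ∧ Ow'.comap (algebraMap F F') = Ow := by
  subst hres
  obtain ⟨Q, hQ, hQP⟩ := Ov'.exists_isPrime_comap_eq (algebraMap F F')
    ((Ov'.comap _).idealOfLE Ow hcoarse)
  refine ⟨Ov'.ofPrime Q, Ov'.le_ofPrime Q, ?_⟩
  rw [ValuationSubring.comap_ofPrime]
  simp only [hQP, ValuationSubring.ofPrime_idealOfLE]
end

section
/- Let F'/F be a field extension, ≤' an ordering on F' extending an ordering ≤ on F, and w a ≤-convex valuation on F. Then there exists a ≤'-convex valuation w' on F' whose restriction to F is w. -/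
/-!
The prolongation is the convex hull in `F'` of the image of `O_w`: the elements of `F'` bounded
in absolute value by an element of `O_w`. Every convex subring of an ordered field containing `1`
is a valuation ring, since an element of absolute value `> 1` has an inverse bounded by `1`. It
contracts to `O_w` because `F → F'` is an order embedding and `O_w` is already convex in `F`.
-/

namespace Subring

variable {K : Type*} [Field K] [LinearOrder K] [IsStrictOrderedRing K]

def orderConvexHull (S : Subring K) : ValuationSubring K where
  carrier := {x | ∃ a ∈ S, |x| ≤ a}
  zero_mem' := ⟨1, S.one_mem, by simp⟩
  one_mem' := ⟨1, S.one_mem, by simp⟩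
  add_mem' := by
    rintro x y ⟨a, ha, hxa⟩ ⟨b, hb, hyb⟩
    exact ⟨a + b, S.add_mem ha hb, (abs_add_le x y).trans (add_le_add hxa hyb)⟩
  mul_mem' := by
    rintro x y ⟨a, ha, hxa⟩ ⟨b, hb, hyb⟩
    refine ⟨a * b, S.mul_mem ha hb, ?_⟩
    rw [abs_mul]
    exact mul_le_mul hxa hyb (abs_nonneg y) ((abs_nonneg x).trans hxa)
  neg_mem' := by
    rintro x ⟨a, ha, hxa⟩
    exact ⟨a, ha, by rwa [abs_neg]⟩
  mem_or_inv_mem' x := by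
    by_cases hx : |x| ≤ 1
    · exact Or.inl ⟨1, S.one_mem, hx⟩
    · refine Or.inr ⟨1, S.one_mem, ?_⟩
      rw [abs_inv]
      exact inv_le_one_of_one_le₀ (le_of_not_ge hx)

theorem mem_orderConvexHull {S : Subring K} {x : K} :
    x ∈ S.orderConvexHull ↔ ∃ a ∈ S, |x| ≤ a :=
  Iff.rfl

theorem mem_orderConvexHull_of_le {S : Subring K} {x y : K} (hx : 0 ≤ x) (hxy : x ≤ y)
    (hy : y ∈ S.orderConvexHull) : x ∈ S.orderConvexHull := by
  obtain ⟨a, ha, hya⟩ := hy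
  exact ⟨a, ha, (abs_of_nonneg hx).trans_le (hxy.trans ((le_abs_self y).trans hya))⟩

end Subring

theorem abs_map_le_map_iff {F F' : Type*} [Field F] [LinearOrder F] [IsStrictOrderedRing F]
    [Field F'] [LinearOrder F'] [IsStrictOrderedRing F'] {f : F →+* F'} (hf : StrictMono f)
    {r a : F} : |f r| ≤ f a ↔ |r| ≤ a := by
  rw [abs_le, abs_le, ← map_neg, hf.le_iff_le, hf.le_iff_le]

theorem Subring.comap_orderConvexHull_map {F F' : Type*} [Field F] [LinearOrder F]
    [IsStrictOrderedRing F] [Field F'] [LinearOrder F'] [IsStrictOrderedRing F'] {f : F →+* F'}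
    (hf : StrictMono f) {S : Subring F} (hS : ∀ x y : F, 0 ≤ x → x ≤ y → y ∈ S → x ∈ S) :
    ((S.map f).orderConvexHull.comap f).toSubring = S := by
  ext r
  simp only [ValuationSubring.mem_toSubring, ValuationSubring.mem_comap, mem_orderConvexHull,
    mem_map]
  constructor
  · rintro ⟨_, ⟨a, ha, rfl⟩, hra⟩
    exact abs_mem_iff.mp (hS _ a (abs_nonneg r) ((abs_map_le_map_iff hf).mp hra) ha)
  · intro hr
    exact ⟨f |r|, ⟨|r|, abs_mem_iff.mpr hr, rfl⟩, (abs_map_le_map_iff hf).mpr le_rfl⟩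

theorem exists_convex_prolongation_of_convex_valuation_general
    (F F' : Type) [Field F] [LinearOrder F] [IsStrictOrderedRing F]
    [Field F'] [LinearOrder F'] [IsStrictOrderedRing F'] [Algebra F F']
    (hmono : Monotone (algebraMap F F'))
    (Ow : ValuationSubring F)
    (hconv : ∀ x y : F, 0 ≤ x → x ≤ y → y ∈ Ow → x ∈ Ow) :
    ∃ Ow' : ValuationSubring F',
      (∀ x y : F', 0 ≤ x → x ≤ y → y ∈ Ow' → x ∈ Ow') ∧
      Ow'.comap (algebraMap F F') = Ow := by
  have hstrict : StrictMono (algebraMap F F') :=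
    hmono.strictMono_of_injective (algebraMap F F').injective
  refine ⟨(Ow.toSubring.map (algebraMap F F')).orderConvexHull,
    fun _ _ ↦ Subring.mem_orderConvexHull_of_le, ?_⟩
  exact ValuationSubring.toSubring_injective (Subring.comap_orderConvexHull_map hstrict hconv)

/-- if `≤'` is an ordering of `F'` extending the ordering `≤` of `F`
(both realized here as linear ordered field structures with a monotone embedding),
and `w` is a `≤`-convex valuation on `F` (given by its valuation subring), then there
is a `≤'`-convex valuation `w'` on `F'` restricting to `w` on `F`. -/
theorem exists_convex_prolongation_of_convex_valuation
    (F F' : Type) [Field F] [LinearOrder F] [IsStrictOrderedRing F]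
    [Field F'] [LinearOrder F'] [IsStrictOrderedRing F'] [Algebra F F']
    (hmono : Monotone (algebraMap F F'))
    (hord : ∀ x : F, 0 ≤ x ↔ 0 ≤ algebraMap F F' x)
    (Ow : ValuationSubring F)
    (hconv : ∀ x y : F, 0 ≤ x → x ≤ y → y ∈ Ow → x ∈ Ow) :
    ∃ Ow' : ValuationSubring F',
      (∀ x y : F', 0 ≤ x → x ≤ y → y ∈ Ow' → x ∈ Ow') ∧
      Ow'.comap (algebraMap F F') = Ow :=
  exists_convex_prolongation_of_convex_valuation_general F F' hmono Ow hconv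
end

section
/- Let F be a field of characteristic 0 that is dense in a real closure for each of two distinct orderings ≤₁ and ≤₂. Then ≤₁ and ≤₂ induce distinct (independent) topologies on F. -/
/-- A linearly ordered field is real closed. -/
def IsRealClosedLOF (R : Type*) [Field R] [LinearOrder R] [IsStrictOrderedRing R] : Prop :=
  (∀ x : R, 0 ≤ x → ∃ y : R, y ^ 2 = x) ∧
    ∀ p : Polynomial R, Odd p.natDegree → ∃ x : R, p.eval x = 0

/-- `P` is the positive cone of a field ordering on `K`. -/
structure IsOrderingCone (K : Type*) [Field K] (P : Set K) : Prop where
  add_mem : ∀ x ∈ P, ∀ y ∈ P, x + y ∈ P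
  mul_mem : ∀ x ∈ P, ∀ y ∈ P, x * y ∈ P
  sq_mem : ∀ x : K, x ^ 2 ∈ P
  neg_one_not_mem : (-1 : K) ∉ P
  total : ∀ x : K, x ∈ P ∨ -x ∈ P

/-- The order topology of the ordering with positive cone `P`: generated by the
open intervals `(a, b)`. -/
def coneTopology (K : Type*) [Field K] (P : Set K) : TopologicalSpace K :=
  TopologicalSpace.generateFrom
    {S | ∃ a b : K, S = {x : K | x - a ∈ P ∧ x ≠ a ∧ b - x ∈ P ∧ x ≠ b}}

/-- `F` is dense in a real closure of the ordering with positive cone `P`. -/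
def DenseInRealClosureOfCone (F : Type) [Field F] (P : Set F) : Prop :=
  ∃ (R : Type) (_ : Field R) (_ : LinearOrder R) (_ : IsStrictOrderedRing R) (_ : Algebra F R),
    (∀ x : F, x ∈ P ↔ 0 ≤ algebraMap F R x) ∧
    Algebra.IsAlgebraic F R ∧ IsRealClosedLOF R ∧
    ∀ x : R, ∀ ε : R, 0 < ε → ∃ y : F, |x - algebraMap F R y| < ε

open Set Topology

/-! If `a` is positive for `P₁` but not for `P₂`, the `P₂`-interval `(a, -a)` is a
`P₂`-neighbourhood of `0` containing no element `y ^ 2 - a`, as none of these is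
`P₂`-below `-a`. On the other hand `a` has a square root `s` in the real closure `R` for `P₁`,
so elements `y ∈ F` close to `s` make `y ^ 2 - a` close to `0` in `R`; since the
`P₁`-topology is coarser than the one induced from `R`, `0` is a `P₁`-limit of such elements. -/

namespace IsOrderingCone

variable {K : Type*} [Field K] {P : Set K}

theorem eq_zero_of_mem_of_neg_mem (h : IsOrderingCone K P) {w : K} (hw : w ∈ P)
    (hnw : -w ∈ P) : w = 0 := by
  by_contra hw₀
  have h₁ : (w * -w) * w⁻¹ ^ 2 ∈ P := h.mul_mem _ (h.mul_mem _ hw _ hnw) _ (h.sq_mem w⁻¹)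
  have h₂ : (w * -w) * w⁻¹ ^ 2 = -1 := by field_simp
  exact h.neg_one_not_mem (h₂ ▸ h₁)

end IsOrderingCone

def coneIoo {K : Type*} [Field K] (P : Set K) (a b : K) : Set K :=
  {x | x - a ∈ P ∧ x ≠ a ∧ b - x ∈ P ∧ x ≠ b}

section ConeIoo

variable {K : Type*} [Field K] {P : Set K}

theorem isOpen_coneIoo (a b : K) : IsOpen[coneTopology K P] (coneIoo P a b) :=
  .basic _ ⟨a, b, rfl⟩

theorem IsOrderingCone.zero_mem_coneIoo (h : IsOrderingCone K P) {a : K} (ha : a ∉ P) :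
    (0 : K) ∈ coneIoo P a (-a) := by
  have ha₀ : a ≠ 0 := by
    rintro rfl
    exact ha (by simpa using h.sq_mem 0)
  have hna : -a ∈ P := (h.total a).resolve_left ha
  exact ⟨by simpa using hna, ha₀.symm, by simpa using hna, (neg_ne_zero.2 ha₀).symm⟩

theorem IsOrderingCone.sq_sub_notMem_coneIoo (h : IsOrderingCone K P) (y a b : K) :
    y ^ 2 - a ∉ coneIoo P b (-a) := by
  rintro ⟨-, -, hlt, hne⟩
  have hy : y ^ 2 = 0 := h.eq_zero_of_mem_of_neg_mem (h.sq_mem y) (by convert hlt using 1; ring)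
  exact hne (by simp [hy])

variable {R : Type*} [Field R] [LinearOrder R] [IsStrictOrderedRing R]

theorem coneIoo_eq_preimage_Ioo (f : K →+* R) (hP : ∀ x, x ∈ P ↔ 0 ≤ f x) (a b : K) :
    coneIoo P a b = f ⁻¹' Ioo (f a) (f b) := by
  ext x
  simp only [coneIoo, mem_ofPred_eq, mem_preimage, mem_Ioo, hP, map_sub, sub_nonneg,
    lt_iff_le_and_ne, ne_eq, f.injective.eq_iff]
  tauto

theorem induced_le_coneTopology [TopologicalSpace R] [OrderTopology R] (f : K →+* R)
    (hP : ∀ x, x ∈ P ↔ 0 ≤ f x) :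
    TopologicalSpace.induced f ‹_› ≤ coneTopology K P :=
  le_generateFrom <| by
    rintro _ ⟨a, b, rfl⟩
    exact ⟨_, isOpen_Ioo, (coneIoo_eq_preimage_Ioo f hP a b).symm⟩

end ConeIoo

theorem denseRange_of_forall_abs_sub_lt {α R : Type*} [AddCommGroup R] [LinearOrder R]
    [IsOrderedAddMonoid R] [NoMaxOrder R] [TopologicalSpace R] [OrderTopology R] {f : α → R}
    (hf : ∀ x ε, 0 < ε → ∃ y, |x - f y| < ε) : DenseRange f := fun x ↦
  (mem_closure_iff_nhds_basis (nhds_basis_abs_sub_lt x)).2 fun ε hε ↦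
    let ⟨y, hy⟩ := hf x ε hε
    ⟨f y, mem_range_self y, by rwa [mem_ofPred_eq, abs_sub_comm]⟩

theorem zero_mem_closure_range_sq_sub {K R : Type*} [Field K] [Field R] [LinearOrder R]
    [IsStrictOrderedRing R] [TopologicalSpace R] [OrderTopology R] {f : K →+* R}
    (hf : DenseRange f) {a : K} {s : R} (hs : s ^ 2 = f a) :
    (0 : K) ∈ closure[TopologicalSpace.induced f ‹_›] (range fun y ↦ y ^ 2 - a) := by
  have hrange : f '' range (fun y ↦ y ^ 2 - a) = (fun r ↦ r ^ 2 - f a) '' range f := by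
    simp only [← range_comp, Function.comp_def, map_sub, map_pow]
  rw [closure_induced, hrange]
  have hg : Continuous fun r : R ↦ r ^ 2 - f a := by fun_prop
  convert image_closure_subset_closure_image hg ⟨s, hf.closure_range ▸ mem_univ s, rfl⟩
  simp [hs]

theorem coneTopology_ne_of_mem_of_notMem {F : Type} [Field F] {P₁ P₂ : Set F}
    (h₂ : IsOrderingCone F P₂) (hd₁ : DenseInRealClosureOfCone F P₁) {a : F} (ha₁ : a ∈ P₁)
    (ha₂ : a ∉ P₂) : coneTopology F P₁ ≠ coneTopology F P₂ := by
  obtain ⟨R, _, _, _, _, hP, -, ⟨hsqrt, -⟩, hdense⟩ := hd₁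
  let := Preorder.topology R
  have : OrderTopology R := ⟨rfl⟩
  let := TopologicalSpace.induced (algebraMap F R) ‹_›
  obtain ⟨s, hs⟩ := hsqrt _ ((hP a).1 ha₁)
  have h₀ := zero_mem_closure_range_sq_sub (denseRange_of_forall_abs_sub_lt hdense) hs
  intro heq
  have hV : IsOpen[coneTopology F P₁] (coneIoo P₂ a (-a)) := heq ▸ isOpen_coneIoo a (-a)
  obtain ⟨_, hy, ⟨y, rfl⟩⟩ :=
    mem_closure_iff.1 h₀ _ (induced_le_coneTopology _ hP _ hV) (h₂.zero_mem_coneIoo ha₂)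
  exact h₂.sq_sub_notMem_coneIoo y a a hy

theorem distinct_topologies_of_dense_in_real_closures_general
    (F : Type) [Field F]
    (P₁ P₂ : Set F) (h₁ : IsOrderingCone F P₁) (h₂ : IsOrderingCone F P₂)
    (hne : P₁ ≠ P₂)
    (hd₁ : DenseInRealClosureOfCone F P₁) (hd₂ : DenseInRealClosureOfCone F P₂) :
    coneTopology F P₁ ≠ coneTopology F P₂ := by
  obtain ⟨a, ha⟩ : ∃ a, ¬(a ∈ P₁ ↔ a ∈ P₂) := by simpa [Set.ext_iff] using hne
  by_cases ha₁ : a ∈ P₁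
  · exact coneTopology_ne_of_mem_of_notMem h₂ hd₁ ha₁ (by tauto)
  · exact (coneTopology_ne_of_mem_of_notMem h₁ hd₂ (by tauto) ha₁).symm

/-- if a field `F` of characteristic 0 is dense in a real closure for each of
two distinct orderings `P₁`, `P₂`, then the two orderings induce distinct topologies
on `F` (i.e. they are independent). -/
theorem distinct_topologies_of_dense_in_real_closures
    (F : Type) [Field F] [CharZero F]
    (P₁ P₂ : Set F) (h₁ : IsOrderingCone F P₁) (h₂ : IsOrderingCone F P₂)
    (hne : P₁ ≠ P₂)
    (hd₁ : DenseInRealClosureOfCone F P₁) (hd₂ : DenseInRealClosureOfCone F P₂) :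
    coneTopology F P₁ ≠ coneTopology F P₂ :=
  distinct_topologies_of_dense_in_real_closures_general F P₁ P₂ h₁ h₂ hne hd₁ hd₂
end

section
/- Let F = K(x₁, …, x_m) be a rational function field in m = 4^i variables over a formally real field K, and let d ∈ K be a sum of squares in K. Then the element e = d + x₁² + ⋯ + x_m² cannot be written as a sum of fewer than 4^i squares in F. -/
/-!
Induction on `m`. Put `R = K[x₁, …, x_{m-1}]`, `L = Frac R` and `c = d + x₁² + ⋯ + x_{m-1}² ∈ R`.
If `e · h²` is a sum of `n` squares in `R[x_m]`, then over `L[X]` the polynomial `X² + c`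
becomes a sum of `n` squares after multiplication by a nonzero square, hence, by Cassels'
theorem, is itself a sum of `n` squares of polynomials. Since `L` is formally real these
polynomials are linear, `aⱼ X + bⱼ`, with `∑ aⱼ² = 1`, `∑ aⱼ bⱼ = 0` and `∑ bⱼ² = c`; a reflection
moving `a` to `±e₀` turns `b` into a vector with vanishing first coordinate, so `c` is a sum of
`n - 1` squares in `L`. Clearing denominators gives the same situation with `m - 1` variables.
-/

open Polynomial

variable {R : Type*}

def IsSumOfSquares [CommSemiring R] (n : ℕ) (c : R) : Prop :=
  ∃ f : Fin n → R, c = ∑ j, f j ^ 2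

theorem IsSumOfSquares.map [CommSemiring R] {S G : Type*} [CommSemiring S] [FunLike G R S]
    [RingHomClass G R S] (φ : G) {n : ℕ} {c : R} (h : IsSumOfSquares n c) :
    IsSumOfSquares n (φ c) := by
  obtain ⟨f, rfl⟩ := h
  exact ⟨fun j => φ (f j), by simp⟩

theorem IsSumSq.exists_isSumOfSquares [CommSemiring R] {s : R} (h : IsSumSq s) :
    ∃ n, IsSumOfSquares n s := by
  induction h with
  | zero => exact ⟨0, Fin.elim0, by simp⟩
  | sq_add a _ ih =>
    obtain ⟨n, f, rfl⟩ := ih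
    exact ⟨n + 1, Fin.cons a f, by simp [Fin.sum_univ_succ, sq]⟩

theorem Finset.sum_mul_sub_mul_sq [CommRing R] {ι : Type*} (s : Finset ι) (u v : R)
    (x y : ι → R) :
    ∑ i ∈ s, (u * x i - v * y i) ^ 2 =
      u ^ 2 * ∑ i ∈ s, x i ^ 2 - 2 * (u * v) * ∑ i ∈ s, x i * y i + v ^ 2 * ∑ i ∈ s, y i ^ 2 := by
  simp only [Finset.mul_sum, ← Finset.sum_sub_distrib, ← Finset.sum_add_distrib]
  exact Finset.sum_congr rfl fun i _ => by ring

namespace IsFormallyReal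

theorem eq_zero_of_sum_sq_eq_zero [CommRing R] [IsFormallyReal R] {ι : Type*} {s : Finset ι}
    {f : ι → R} (h : ∑ i ∈ s, f i ^ 2 = 0) {i : ι} (hi : i ∈ s) : f i = 0 := by
  classical
  rw [← Finset.add_sum_erase s _ hi] at h
  exact IsNilpotent.eq_zero ⟨2, eq_zero_of_add_right (IsSquare.sq _).isSumSq
    (IsSumSq.sum_sq _ _) h⟩

theorem of_forall_sum_sq_eq_zero [CommRing R]
    (h : ∀ (n : ℕ) (f : Fin n → R), ∑ j, f j ^ 2 = 0 → ∀ j, f j = 0) : IsFormallyReal R :=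
  of_eq_zero_of_eq_zero_of_mul_self_add fun {s a} hs has => by
    obtain ⟨n, f, rfl⟩ := hs.exists_isSumOfSquares
    exact h (n + 1) (Fin.cons a f) (by simpa [Fin.sum_univ_succ, sq] using has) 0

theorem of_forall_map_eq_zero {A ι : Type*} [CommRing A] [CommRing R] [IsFormallyReal R]
    (φ : ι → A →+* R) (hφ : ∀ a, (∀ i, φ i a = 0) → a = 0) : IsFormallyReal A :=
  of_forall_sum_sq_eq_zero fun _ f hf j => hφ _ fun i =>
    eq_zero_of_sum_sq_eq_zero (f := fun j => φ i (f j)) (by simpa using congrArg (φ i) hf)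
      (Finset.mem_univ j)

instance (priority := 100) toIsSemireal [CommRing R] [Nontrivial R] [IsFormallyReal R] :
    IsSemireal R where
  one_add_ne_zero hs h := one_ne_zero (eq_zero_of_add_right IsSumSq.one hs h)

theorem of_isSemireal {K : Type*} [Field K] [IsSemireal K] : IsFormallyReal K :=
  of_eq_zero_of_eq_zero_of_mul_self_add fun {s a} hs h => by
    by_contra ha
    have hneg : -1 = s * (a⁻¹ * a⁻¹) := by
      rw [show s = -(a * a) by linear_combination h]
      field_simp
    exact IsSemireal.not_isSumSq_neg_one K (hneg ▸ hs.mul (IsSumSq.mul_self _))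

instance [CommRing R] [IsDomain R] [IsFormallyReal R] : IsFormallyReal R[X] :=
  of_forall_map_eq_zero (fun r : R => evalRingHom r) fun _ hp =>
    Polynomial.funext (by simpa using hp)

instance {σ : Type*} [CommRing R] [IsDomain R] [IsFormallyReal R] :
    IsFormallyReal (MvPolynomial σ R) :=
  of_forall_map_eq_zero (fun x : σ → R => MvPolynomial.eval x) fun _ hp =>
    MvPolynomial.funext (by simpa using hp)

end IsFormallyReal

section FractionRing

variable (R) {L : Type*} [CommRing R] [CommRing L] [Algebra R L] [IsFractionRing R L]

theorem IsFractionRing.exists_algebraMap_eq_mul {n : ℕ} (f : Fin n → L) :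
    ∃ b ∈ nonZeroDivisors R, ∃ p : Fin n → R,
      ∀ j, algebraMap R L (p j) = algebraMap R L b * f j := by
  obtain ⟨b, hb⟩ := IsLocalization.exist_integer_multiples_of_finite (nonZeroDivisors R) f
  choose p hp using hb
  exact ⟨b, b.2, p, fun j => by rw [hp j, Algebra.smul_def]⟩

theorem IsFractionRing.isFormallyReal [IsFormallyReal R] : IsFormallyReal L :=
  IsFormallyReal.of_forall_sum_sq_eq_zero fun _ f hf j => by
    obtain ⟨b, hb, p, hp⟩ := IsFractionRing.exists_algebraMap_eq_mul R f
    have hp0 : ∑ j, p j ^ 2 = 0 := IsFractionRing.injective R L <| by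
      simp [map_sum, hp, mul_pow, ← Finset.mul_sum, hf]
    have := hp j
    rw [IsFormallyReal.eq_zero_of_sum_sq_eq_zero hp0 (Finset.mem_univ j), map_zero,
      eq_comm] at this
    exact (IsLocalization.map_units L ⟨b, hb⟩).mul_right_eq_zero.mp this

instance [IsDomain R] [IsFormallyReal R] : IsFormallyReal (FractionRing R) :=
  IsFractionRing.isFormallyReal R

variable {R}

theorem IsSumOfSquares.exists_mul_sq_of_algebraMap {n : ℕ} {c : R}
    (h : IsSumOfSquares n (algebraMap R L c)) :
    ∃ b ∈ nonZeroDivisors R, IsSumOfSquares n (c * b ^ 2) := by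
  obtain ⟨f, hf⟩ := h
  obtain ⟨b, hb, p, hp⟩ := IsFractionRing.exists_algebraMap_eq_mul R f
  refine ⟨b, hb, p, IsFractionRing.injective R L ?_⟩
  rw [map_mul, map_pow, hf, Finset.sum_mul, map_sum]
  exact Finset.sum_congr rfl fun j _ => by rw [map_pow, hp]; ring

end FractionRing

/-- `(u g - v q, u h - v)` is `u` times the reflection of `(g, h)` in `(q, 1)` with respect to
the form `∑ xⱼ² - p y²`, for which `(g, h)` is isotropic. -/
theorem cassels_identity [CommRing R] {n : ℕ} {p h : R} {g : Fin n → R} (q : Fin n → R)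
    (hg : p * h ^ 2 = ∑ j, g j ^ 2) :
    h * ((∑ j, q j ^ 2 - p) * h - 2 * (∑ j, g j * q j - p * h)) = ∑ j, (g j - h * q j) ^ 2 ∧
      p * ((∑ j, q j ^ 2 - p) * h - 2 * (∑ j, g j * q j - p * h)) ^ 2 =
        ∑ j, ((∑ j, q j ^ 2 - p) * g j - 2 * (∑ j, g j * q j - p * h) * q j) ^ 2 := by
  constructor
  · have := Finset.sum_mul_sub_mul_sq Finset.univ 1 h g q
    simp only [one_mul, one_pow] at this
    rw [this]
    linear_combination hg
  · rw [Finset.sum_mul_sub_mul_sq]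
    linear_combination (∑ j, q j ^ 2 - p) ^ 2 * hg

theorem Polynomial.isSumOfSquares_of_mul_sq {F : Type*} [Field F] [IsFormallyReal F] {n : ℕ}
    {p h : F[X]} (hh : h ≠ 0) (hs : IsSumOfSquares n (p * h ^ 2)) : IsSumOfSquares n p := by
  induction hN : h.natDegree using Nat.strong_induction_on generalizing h with
  | _ N ih =>
  obtain ⟨g, hg⟩ := hs
  by_cases hdvd : ∀ j, h ∣ g j
  · choose q hq using hdvd
    refine ⟨q, mul_right_cancel₀ (pow_ne_zero 2 hh) ?_⟩
    rw [hg, Finset.sum_mul]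
    exact Finset.sum_congr rfl fun j _ => by rw [hq j]; ring
  obtain ⟨j₀, hj₀⟩ := not_forall.mp hdvd
  -- With `q = g / h` the new denominator `h'` satisfies `h * h' = ∑ (g j % h) ^ 2`,
  -- so `deg h' < deg h`.
  obtain ⟨hprod, hsum⟩ := cassels_identity (fun j => g j / h) hg
  set h' := (∑ j, (g j / h) ^ 2 - p) * h - 2 * (∑ j, g j * (g j / h) - p * h)
  have hmod : ∀ j, g j - h * (g j / h) = g j % h := fun j =>
    (EuclideanDomain.mod_eq_sub_mul_div _ _).symm
  simp only [hmod] at hprod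
  have hN0 : N ≠ 0 := by
    rintro rfl
    exact hj₀ (isUnit_iff_degree_eq_zero.mpr (by rw [degree_eq_natDegree hh, hN]; rfl)).dvd
  have ht : ∑ j, (g j % h) ^ 2 ≠ 0 := fun h0 =>
    hj₀ (EuclideanDomain.mod_eq_zero.mp
      (IsFormallyReal.eq_zero_of_sum_sq_eq_zero h0 (Finset.mem_univ j₀)))
  have hh' : h' ≠ 0 := right_ne_zero_of_mul (hprod ▸ ht)
  have hdeg : (∑ j, (g j % h) ^ 2).natDegree ≤ 2 * (N - 1) :=
    natDegree_sum_le_of_forall_le _ _ fun j _ =>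
      natDegree_pow_le.trans (by have := natDegree_mod_lt (g j) (hN ▸ hN0); omega)
  rw [← hprod, natDegree_mul hh hh'] at hdeg
  exact ih _ (by omega) hh' ⟨_, hsum⟩ rfl

theorem Polynomial.natDegree_le_of_natDegree_sum_sq_le [CommRing R] [IsFormallyReal R]
    {ι : Type*} {s : Finset ι} {g : ι → R[X]} {k : ℕ}
    (hk : (∑ i ∈ s, g i ^ 2).natDegree ≤ 2 * k) {i : ι} (hi : i ∈ s) : (g i).natDegree ≤ k := by
  obtain ⟨i₀, hi₀, hD⟩ := s.exists_max_image (fun i => (g i).natDegree) ⟨i, hi⟩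
  by_contra! hlt
  have hkD : k < (g i₀).natDegree := hlt.trans_le (hD i hi)
  have hcoeff : ∑ j ∈ s, (g j).coeff (g i₀).natDegree ^ 2 = 0 := by
    rw [← coeff_eq_zero_of_natDegree_lt (hk.trans_lt (by omega : 2 * k < 2 * (g i₀).natDegree)),
      finsetSum_coeff]
    exact Finset.sum_congr rfl fun j hj => (coeff_pow_of_natDegree_le (hD j hj)).symm
  have hg₀ : g i₀ ≠ 0 := fun h0 => by simp [h0] at hkD
  exact leadingCoeff_ne_zero.mpr hg₀ (IsFormallyReal.eq_zero_of_sum_sq_eq_zero hcoeff hi₀)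

theorem Polynomial.sum_sq_of_natDegree_le_one [CommRing R] {n : ℕ} {g : Fin n → R[X]}
    (hg : ∀ j, (g j).natDegree ≤ 1) :
    ∑ j, g j ^ 2 = C (∑ j, (g j).coeff 1 ^ 2) * X ^ 2 +
      C (2 * ∑ j, (g j).coeff 1 * (g j).coeff 0) * X + C (∑ j, (g j).coeff 0 ^ 2) := by
  simp only [map_sum, map_mul, Finset.sum_mul, Finset.mul_sum, ← Finset.sum_add_distrib]
  refine Finset.sum_congr rfl fun j _ => ?_
  rw [eq_X_add_C_of_natDegree_le_one (hg j)]
  simp only [coeff_add, coeff_C_mul, coeff_X_one, coeff_X_zero, coeff_C_zero, coeff_C_succ,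
    mul_one, mul_zero, add_zero, zero_add, map_pow, map_ofNat]
  ring

theorem isSumOfSquares_sq_add_sum_sq {F : Type*} [Field F] (h2 : (2 : F) ≠ 0) {n : ℕ}
    {a₀ b₀ : F} {a b : Fin n → F} (ha : a₀ ^ 2 + ∑ j, a j ^ 2 = 1)
    (hab : a₀ * b₀ + ∑ j, a j * b j = 0) : IsSumOfSquares n (b₀ ^ 2 + ∑ j, b j ^ 2) := by
  -- The reflection exchanging `(a₀, a)` and `(ε, 0)` maps `(b₀, b)` to
  -- `(0, b - b₀ / (a₀ - ε) • a)`.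
  obtain ⟨ε, hε, hq⟩ : ∃ ε : F, ε ^ 2 = 1 ∧ a₀ - ε ≠ 0 := by
    by_cases h1 : a₀ - 1 = 0
    · exact ⟨-1, by norm_num, fun h => h2 (by linear_combination h - h1)⟩
    · exact ⟨1, one_pow 2, h1⟩
  refine ⟨fun j => b j - b₀ / (a₀ - ε) * a j, ?_⟩
  have hexp := Finset.sum_mul_sub_mul_sq Finset.univ 1 (b₀ / (a₀ - ε)) b a
  simp only [one_mul, one_pow] at hexp
  rw [hexp, show ∑ j, a j ^ 2 = 1 - a₀ ^ 2 by linear_combination ha,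
    show ∑ j, b j * a j = -(a₀ * b₀) by simp_rw [mul_comm (b _)]; linear_combination hab]
  field_simp
  linear_combination b₀ ^ 2 * hε

theorem Polynomial.exists_isSumOfSquares_of_X_sq_add_C {F : Type*} [Field F] [IsFormallyReal F]
    {n : ℕ} {c : F} (h : IsSumOfSquares n (X ^ 2 + C c : F[X])) :
    ∃ n', n = n' + 1 ∧ IsSumOfSquares n' c := by
  obtain ⟨g, hg⟩ := h
  have hdeg : ∀ j, (g j).natDegree ≤ 1 := fun j =>
    natDegree_le_of_natDegree_sum_sq_le (by rw [← hg]; compute_degree!) (Finset.mem_univ j)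
  rw [sum_sq_of_natDegree_le_one hdeg] at hg
  have hcoeff k := congrArg (coeff · k) hg
  simp only [coeff_add, coeff_X_pow, coeff_C_mul_X_pow, coeff_C_mul_X, coeff_C] at hcoeff
  have ha : ∑ j, (g j).coeff 1 ^ 2 = 1 := by simpa using (hcoeff 2).symm
  have hab : ∑ j, (g j).coeff 1 * (g j).coeff 0 = 0 := by simpa using (hcoeff 1).symm
  have hc : c = ∑ j, (g j).coeff 0 ^ 2 := by simpa using hcoeff 0
  rcases n with _ | n
  · simp at ha
  · rw [Fin.sum_univ_succ] at ha hab hc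
    exact ⟨n, rfl, hc ▸ isSumOfSquares_sq_add_sum_sq two_ne_zero ha hab⟩

theorem Polynomial.exists_isSumOfSquares_mul_sq_of_X_sq_add_C_mul_sq [CommRing R] [IsDomain R]
    [IsFormallyReal R] {n : ℕ} {c : R} {h : R[X]} (hh : h ≠ 0)
    (hs : IsSumOfSquares n ((X ^ 2 + C c) * h ^ 2)) :
    ∃ n', n = n' + 1 ∧ ∃ b ≠ 0, IsSumOfSquares n' (c * b ^ 2) := by
  have hL := hs.map (mapRingHom (algebraMap R (FractionRing R)))
  simp only [map_mul, map_pow, map_add, coe_mapRingHom, Polynomial.map_X, Polynomial.map_C] at hL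
  have hh' : h.map (algebraMap R (FractionRing R)) ≠ 0 :=
    (Polynomial.map_ne_zero_iff (IsFractionRing.injective R (FractionRing R))).mpr hh
  obtain ⟨n', rfl, hc⟩ := exists_isSumOfSquares_of_X_sq_add_C (isSumOfSquares_of_mul_sq hh' hL)
  obtain ⟨b, hb, hcb⟩ := hc.exists_mul_sq_of_algebraMap
  exact ⟨n', rfl, b, nonZeroDivisors.ne_zero hb, hcb⟩

open MvPolynomial in
theorem MvPolynomial.not_isSumOfSquares_C_add_sum_X_sq_mul_sq [CommRing R] [IsDomain R]
    [IsFormallyReal R] (d : R) {m n : ℕ} (hnm : n < m) {h : MvPolynomial (Fin m) R}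
    (hh : h ≠ 0) : ¬ IsSumOfSquares n ((C d + ∑ j, X j ^ 2) * h ^ 2) := by
  induction m generalizing n with
  | zero => omega
  | succ m ih =>
    intro hs
    have hφ : finSuccEquiv R m (C d + ∑ j, X j ^ 2) =
        Polynomial.X ^ 2 + Polynomial.C (C d + ∑ j, X j ^ 2) := by
      simp only [finSuccEquiv_apply, coe_eval₂Hom, eval₂_C, eval₂_X, RingHom.coe_comp,
        Function.comp_apply, Fin.sum_univ_succ, Fin.cases_zero, Fin.cases_succ, map_add, map_sum,
        map_pow]
      ring
    have hs' := hs.map (finSuccEquiv R m)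
    rw [map_mul, map_pow, hφ] at hs'
    obtain ⟨n', rfl, b, hb, hcb⟩ :=
      Polynomial.exists_isSumOfSquares_mul_sq_of_X_sq_add_C_mul_sq (by simpa using hh) hs'
    exact ih (by omega) hb hcb

theorem sum_of_squares_length_in_rational_function_field_general
    (K : Type) [Field K]
    -- `K` is formally real: `-1` is not a sum of squares in `K`
    (hreal : ∀ (n : ℕ) (f : Fin n → K), ∑ j, (f j) ^ 2 ≠ -1)
    (i : ℕ) (m : ℕ) (hm : m = 4 ^ i)
    (d : K) :
    ∀ n : ℕ, n < 4 ^ i →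
      ∀ f : Fin n → FractionRing (MvPolynomial (Fin m) K),
        (algebraMap (MvPolynomial (Fin m) K) (FractionRing (MvPolynomial (Fin m) K))
            (MvPolynomial.C d + ∑ j : Fin m, (MvPolynomial.X j) ^ 2)) ≠
          ∑ j, (f j) ^ 2 := by
  intro n hn f hf
  have : IsSemireal K := IsSemireal.of_not_isSumSq_neg_one fun h => by
    obtain ⟨k, g, hg⟩ := h.exists_isSumOfSquares
    exact hreal k g hg.symm
  have : IsFormallyReal K := .of_isSemireal
  obtain ⟨b, hb, hcb⟩ := IsSumOfSquares.exists_mul_sq_of_algebraMap ⟨f, hf⟩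
  exact MvPolynomial.not_isSumOfSquares_C_add_sum_X_sq_mul_sq d (hm ▸ hn)
    (nonZeroDivisors.ne_zero hb) hcb

/-- let `F = K(x₁, …, x_m)` be the rational function field in `m = 4^i`
variables over a formally real field `K`, and let `d ∈ K` be a sum of squares in `K`.
Then `e = d + x₁² + ⋯ + x_m²` is not a sum of fewer than `4^i` squares in `F`. -/
theorem sum_of_squares_length_in_rational_function_field
    (K : Type) [Field K]
    -- `K` is formally real: `-1` is not a sum of squares in `K`
    (hreal : ∀ (n : ℕ) (f : Fin n → K), ∑ j, (f j) ^ 2 ≠ -1)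
    (i : ℕ) (m : ℕ) (hm : m = 4 ^ i)
    (d : K) (hd : ∃ (n : ℕ) (f : Fin n → K), d = ∑ j, (f j) ^ 2) :
    ∀ n : ℕ, n < 4 ^ i →
      ∀ f : Fin n → FractionRing (MvPolynomial (Fin m) K),
        (algebraMap (MvPolynomial (Fin m) K) (FractionRing (MvPolynomial (Fin m) K))
            (MvPolynomial.C d + ∑ j : Fin m, (MvPolynomial.X j) ^ 2)) ≠
          ∑ j, (f j) ^ 2 :=
  sum_of_squares_length_in_rational_function_field_general K hreal i m hm d
end

section
/- Let p be a prime and f ≥ 1. There exists a monic polynomial g ∈ ℤ[X] such that for every valued field (F, v) whose residue field is an extension of 𝔽_p of degree at most f (or more generally whose residue field contains no root of the reduction of g), and for all x, y ∈ F, the homogenization φ(x,y) = y^{deg g}·g(x/y) satisfies v(φ(x,y)) = deg(g)·min(v(x), v(y)). -/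
/-- The evaluation of the homogenization of a polynomial `g ∈ ℤ[X]` (with respect to its
degree) at a pair of field elements: `φ(x, y) = ∑ gᵢ xⁱ y^(deg g − i) = y^(deg g) g(x/y)`. -/
noncomputable def homogEval {F : Type*} [Field F] (g : Polynomial ℤ) (x y : F) : F :=
  ∑ i ∈ Finset.range (g.natDegree + 1), (g.coeff i : F) * x ^ i * y ^ (g.natDegree - i)

/-! Take for `g` a monic lift of an irreducible polynomial of degree `f + 1` over `𝔽_p`: it has
no root in a field with at most `p ^ f` elements. For `y ≠ 0`, `φ(x, y) = y ^ deg g · g(x / y)`,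
and `v (g z) = max (v z) 1 ^ deg g`: if `v z ≤ 1`, then `g z` is a unit of the valuation ring
since its residue is not a root of the reduction of `g`; if `v z > 1`, the leading term
dominates. -/

open Polynomial IsLocalRing

theorem ZMod.exists_monic_irreducible_natDegree_eq (p : ℕ) [Fact p.Prime] {n : ℕ}
    (hn : n ≠ 0) :
    ∃ P : (ZMod p)[X], P.Monic ∧ Irreducible P ∧ P.natDegree = n := by
  obtain ⟨α, hα⟩ := Field.exists_primitive_element_of_finite_top (ZMod p) (GaloisField p n)
  have hα_int : IsIntegral (ZMod p) α := .of_finite _ α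
  refine ⟨minpoly (ZMod p) α, minpoly.monic hα_int, minpoly.irreducible hα_int, ?_⟩
  rw [← IntermediateField.adjoin.finrank hα_int, hα, IntermediateField.finrank_top',
    GaloisField.finrank p hn]

theorem exists_monic_natDegree_eq_irreducible_map_zmod (p : ℕ) [Fact p.Prime] {n : ℕ}
    (hn : n ≠ 0) :
    ∃ g : ℤ[X], g.Monic ∧ g.natDegree = n ∧
      Irreducible (g.map (Int.castRingHom (ZMod p))) := by
  obtain ⟨P, hP_monic, hP_irr, hP_deg⟩ := ZMod.exists_monic_irreducible_natDegree_eq p hn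
  have hP_lifts : P ∈ lifts (Int.castRingHom (ZMod p)) :=
    mem_lifts_of_surjective (ZMod.ringHom_surjective _) P
  obtain ⟨g, rfl, hg_deg, hg_monic⟩ := lifts_and_natDegree_eq_and_monic hP_lifts hP_monic
  exact ⟨g, hg_monic, hg_deg.trans hP_deg, hP_irr⟩

theorem Irreducible.card_pow_natDegree_le {k K : Type*} [Field k] [Fintype k]
    [Field K] [Fintype K] [Algebra k K] {P : k[X]} (hP : Irreducible P) {a : K}
    (ha : aeval a P = 0) : Fintype.card k ^ P.natDegree ≤ Fintype.card K := by
  have hdeg : P.natDegree = (minpoly k a).natDegree := by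
    rw [← minpoly.eq_of_irreducible hP ha,
      natDegree_mul_C (inv_ne_zero (leadingCoeff_ne_zero.mpr hP.ne_zero))]
  rw [Module.card_eq_pow_finrank (K := k) (V := K), hdeg]
  exact Nat.pow_le_pow_right Fintype.card_pos (minpoly.natDegree_le a)

theorem eval_map_intCast_ne_zero_of_card_lt {p : ℕ} [Fact p.Prime] {g : ℤ[X]} (hg : g.Monic)
    (hg_irr : Irreducible (g.map (Int.castRingHom (ZMod p)))) {K : Type*} [Field K] [Fintype K]
    [CharP K p] (hK : Fintype.card K < p ^ g.natDegree) (a : K) :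
    (g.map (Int.castRingHom K)).eval a ≠ 0 := by
  let := ZMod.algebra K p
  intro ha
  have hroot : aeval a (g.map (Int.castRingHom (ZMod p))) = 0 := by
    rwa [← eval_map_algebraMap, map_map,
      RingHom.ext_int ((algebraMap (ZMod p) K).comp _) (Int.castRingHom K)]
  have := hg_irr.card_pow_natDegree_le hroot
  rw [ZMod.card, hg.natDegree_map] at this
  omega

theorem Polynomial.eval_map_intCast_apply {R S : Type*} [Ring R] [Ring S] (φ : R →+* S)
    (g : ℤ[X]) (r : R) :
    (g.map (Int.castRingHom S)).eval (φ r) = φ ((g.map (Int.castRingHom R)).eval r) := by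
  rw [eval_map, eval_map, hom_eval₂, RingHom.ext_int (φ.comp _) (Int.castRingHom S)]

theorem homogEval_zero_right {F : Type*} [Field F] (g : ℤ[X]) (x : F) :
    homogEval g x 0 = g.leadingCoeff * x ^ g.natDegree := by
  rw [homogEval, Finset.sum_eq_single_of_mem g.natDegree (Finset.self_mem_range_succ _)]
  · simp
  · intro i hi hin
    rw [zero_pow (by grind), mul_zero]

theorem homogEval_eq_pow_mul_eval {F : Type*} [Field F] (g : ℤ[X]) (x : F) {y : F}
    (hy : y ≠ 0) :
    homogEval g x y = y ^ g.natDegree * (g.map (Int.castRingHom F)).eval (x / y) := by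
  rw [homogEval, eval_eq_sum_range' (Nat.lt_succ_of_le natDegree_map_le), Finset.mul_sum]
  refine Finset.sum_congr rfl fun i hi => ?_
  have hi : i ≤ g.natDegree := Nat.lt_succ_iff.mp (Finset.mem_range.mp hi)
  rw [coeff_map, eq_intCast, div_pow, ← Nat.sub_add_cancel hi, pow_add, Nat.add_sub_cancel]
  field_simp

namespace Valuation

variable {F Γ₀ : Type*} [Field F] [LinearOrderedCommGroupWithZero Γ₀] (v : Valuation F Γ₀)

theorem map_eval_of_one_lt {P : F[X]} (hP : P.Monic) (hcoeff : ∀ i, v (P.coeff i) ≤ 1) {z : F}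
    (hz : 1 < v z) : v (P.eval z) = v z ^ P.natDegree := by
  classical
  rw [eval_eq_sum_range, v.map_sum_eq_of_lt (Finset.self_mem_range_succ _)]
  · rw [hP.coeff_natDegree, one_mul, map_pow]
  · intro i hi
    have hi : i < P.natDegree := by
      simp only [Finset.mem_sdiff, Finset.mem_range, Finset.mem_singleton] at hi
      omega
    calc v (P.coeff i * z ^ i) ≤ v z ^ i := by
          rw [map_mul, map_pow]; exact mul_le_of_le_one_left' (hcoeff i)
      _ < v z ^ P.natDegree := pow_lt_pow_right₀ hz hi
      _ = v (P.coeff P.natDegree * z ^ P.natDegree) := by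
          rw [hP.coeff_natDegree, one_mul, map_pow]

theorem map_eval_map_intCast_eq_one {g : ℤ[X]}
    (hres : ∀ a : ResidueField v.valuationSubring,
      (g.map (Int.castRingHom (ResidueField v.valuationSubring))).eval a ≠ 0)
    {z : F} (hz : v z ≤ 1) : v ((g.map (Int.castRingHom F)).eval z) = 1 := by
  set w := (g.map (Int.castRingHom v.valuationSubring)).eval ⟨z, hz⟩
  have hw : (w : F) = (g.map (Int.castRingHom F)).eval z :=
    (eval_map_intCast_apply v.valuationSubring.subtype g _).symm
  have hw_notMem : w ∉ maximalIdeal v.valuationSubring := by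
    rw [← residue_eq_zero_iff, ← eval_map_intCast_apply]
    exact hres _
  rw [← hw]
  exact le_antisymm w.2 (not_lt.mp (mt v.mem_maximalIdeal_iff.mpr hw_notMem))

theorem map_eval_map_intCast {g : ℤ[X]} (hg : g.Monic)
    (hres : ∀ a : ResidueField v.valuationSubring,
      (g.map (Int.castRingHom (ResidueField v.valuationSubring))).eval a ≠ 0)
    (z : F) : v ((g.map (Int.castRingHom F)).eval z) = max (v z) 1 ^ g.natDegree := by
  rcases le_or_gt (v z) 1 with hz | hz
  · rw [max_eq_right hz, one_pow, v.map_eval_map_intCast_eq_one hres hz]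
  · rw [max_eq_left hz.le, v.map_eval_of_one_lt (hg.map _) _ hz, hg.natDegree_map]
    intro i
    rw [coeff_map, eq_intCast]
    exact (v.mem_integer_iff _).mp (intCast_mem v.integer _)

theorem map_homogEval {g : ℤ[X]} (hg : g.Monic)
    (hres : ∀ a : ResidueField v.valuationSubring,
      (g.map (Int.castRingHom (ResidueField v.valuationSubring))).eval a ≠ 0)
    (x y : F) : v (homogEval g x y) = max (v x) (v y) ^ g.natDegree := by
  rcases eq_or_ne y 0 with rfl | hy
  · simp [homogEval_zero_right, hg.leadingCoeff]
  · rw [homogEval_eq_pow_mul_eval g x hy, map_mul, map_pow, v.map_eval_map_intCast hg hres,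
      ← mul_pow, mul_comm, ← max_mul_mul_right, map_div₀,
      div_mul_cancel₀ _ (v.ne_zero_iff.mpr hy), one_mul]

end Valuation

theorem exists_monic_poly_homog_valuation_general (p : ℕ) (hp : p.Prime) (f : ℕ) :
    ∃ g : Polynomial ℤ, g.Monic ∧
      -- the reduction of `g` has no root in any extension of `𝔽_p` of degree at most `f`
      (∀ (K : Type) (_ : Field K) (_ : Fintype K) (_ : CharP K p),
        Fintype.card K ≤ p ^ f → ∀ a : K, (g.map (Int.castRingHom K)).eval a ≠ 0) ∧
      -- for every valued field whose residue field contains no root of the reduction of `g`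
      (∀ (F : Type) (_ : Field F) (Γ₀ : Type) (_ : LinearOrderedCommGroupWithZero Γ₀)
          (v : Valuation F Γ₀),
        (∀ a : IsLocalRing.ResidueField v.valuationSubring,
            (g.map (Int.castRingHom (IsLocalRing.ResidueField v.valuationSubring))).eval a
              ≠ 0) →
        ∀ x y : F, v (homogEval g x y) = max (v x) (v y) ^ g.natDegree) := by
  have := Fact.mk hp
  obtain ⟨g, hg_monic, hg_deg, hg_irr⟩ :=
    exists_monic_natDegree_eq_irreducible_map_zmod p (Nat.succ_ne_zero f)
  refine ⟨g, hg_monic, fun K _ _ _ hK a => ?_,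
    fun F _ Γ₀ _ v hres x y => v.map_homogEval hg_monic hres x y⟩
  refine eval_map_intCast_ne_zero_of_card_lt hg_monic hg_irr (hK.trans_lt ?_) a
  rw [hg_deg]
  exact Nat.pow_lt_pow_right hp.one_lt (lt_add_one f)

/-- for a prime `p` and `f ≥ 1` there is a monic `g ∈ ℤ[X]` such that no
extension of `𝔽_p` of degree at most `f` contains a root of the reduction of `g`, and for
every valued field `(F, v)` whose residue field contains no root of the reduction of `g`,
the homogenization satisfies `v(φ(x,y)) = deg(g)·min(v(x), v(y))` (multiplicatively:
`v(φ(x,y)) = max(v x, v y) ^ deg g`, since Mathlib valuations are multiplicative). -/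
theorem exists_monic_poly_homog_valuation (p : ℕ) (hp : p.Prime) (f : ℕ) (hf : 1 ≤ f) :
    ∃ g : Polynomial ℤ, g.Monic ∧
      -- the reduction of `g` has no root in any extension of `𝔽_p` of degree at most `f`
      (∀ (K : Type) (_ : Field K) (_ : Fintype K) (_ : CharP K p),
        Fintype.card K ≤ p ^ f → ∀ a : K, (g.map (Int.castRingHom K)).eval a ≠ 0) ∧
      -- for every valued field whose residue field contains no root of the reduction of `g`
      (∀ (F : Type) (_ : Field F) (Γ₀ : Type) (_ : LinearOrderedCommGroupWithZero Γ₀)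
          (v : Valuation F Γ₀),
        (∀ a : IsLocalRing.ResidueField v.valuationSubring,
            (g.map (Int.castRingHom (IsLocalRing.ResidueField v.valuationSubring))).eval a
              ≠ 0) →
        ∀ x y : F, v (homogEval g x y) = max (v x) (v y) ^ g.natDegree) :=
  exists_monic_poly_homog_valuation_general p hp f
end
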